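/- arXiv:1610.08865 — 5 statements merged into one kernel-verified Lean document; each statement's English description precedes it below -/
import Mathlib

section
/- Let Ω ⊆ ℝⁿ be a compact convex body and let a, y₁, y₂, …, y_m, b be collinear points occurring in this order on a common line, with a, b ∈ ∂Ω, y₁, …, y_m ∈ Ω, a ≠ y₁ and y_m ≠ b. For points u, v on this line define d(u,v) = (|a−b|·|u−v|)/(|a−u|·|v−b|). Then d(y₁,y₂) + d(y₂,y₃) + ⋯ + d(y_{m−1},y_m) ≤ d(y₁,y_m). -/
lemma key_ineq (L x y z : ℝ) (hx : 0 < x) (hxy : x ≤ y) (hyz : y ≤ z) (hzL : z < L) :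
    L * (y - x) / (x * (L - y)) + L * (z - y) / (y * (L - z)) ≤
      L * (z - x) / (x * (L - z)) := by
  have hy0 : 0 < y := lt_of_lt_of_le hx hxy
  have hLz : 0 < L - z := by linarith
  have hLy : 0 < L - y := by linarith
  have hL : 0 < L := by linarith
  rw [div_add_div _ _ (by positivity) (by positivity),
    div_le_div_iff₀ (by positivity) (by positivity)]
  nlinarith [mul_nonneg (mul_nonneg (mul_nonneg (mul_nonneg
      (mul_pos hx hLz).le hL.le) hL.le) (sub_nonneg.2 hyz)) (sub_nonneg.2 hxy)]

/-- Lemma 6 of the paper, additivity of the cross-ratio distance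
along a chord.  Collinear points `a, y₁, …, y_m, b` occur in this order (each point
lies between the others, expressed via `Wbtw`), `a, b ∈ ∂Ω`, `y₁, …, y_m ∈ Ω`,
`a ≠ y₁`, `y_m ≠ b`.  With `d(u,v) = |a−b|·|u−v|/(|a−u|·|v−b|)`, one has
`d(y₁,y₂) + ⋯ + d(y_{m−1},y_m) ≤ d(y₁,y_m)`. -/
theorem stmt_1 (n m : ℕ) (hm : 1 ≤ m) (Ω : Set (EuclideanSpace ℝ (Fin n)))
    (hcomp : IsCompact Ω) (hconv : Convex ℝ Ω)
    (a b : EuclideanSpace ℝ (Fin n)) (y : ℕ → EuclideanSpace ℝ (Fin n))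
    (ha : a ∈ frontier Ω) (hb : b ∈ frontier Ω)
    (hy : ∀ i, 1 ≤ i → i ≤ m → y i ∈ Ω)
    (horder : ∀ i j k, 1 ≤ i → i ≤ j → j ≤ k → k ≤ m → Wbtw ℝ (y i) (y j) (y k))
    (horderA : ∀ i j, 1 ≤ i → i ≤ j → j ≤ m → Wbtw ℝ a (y i) (y j))
    (horderB : ∀ i j, 1 ≤ i → i ≤ j → j ≤ m → Wbtw ℝ (y i) (y j) b)
    (horderAB : ∀ i, 1 ≤ i → i ≤ m → Wbtw ℝ a (y i) b)
    (hay : a ≠ y 1) (hyb : y m ≠ b) :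
    ∑ i ∈ Finset.Ico 1 m,
        dist a b * dist (y i) (y (i + 1)) / (dist a (y i) * dist (y (i + 1)) b) ≤
      dist a b * dist (y 1) (y m) / (dist a (y 1) * dist (y m) b) := by
  have hdA : ∀ i j, 1 ≤ i → i ≤ j → j ≤ m →
      dist a (y i) + dist (y i) (y j) = dist a (y j) := fun i j h1 h2 h3 =>
    dist_add_dist_eq_iff.2 (horderA i j h1 h2 h3)
  have hdAB : ∀ i, 1 ≤ i → i ≤ m →
      dist a (y i) + dist (y i) b = dist a b := fun i h1 h2 =>
    dist_add_dist_eq_iff.2 (horderAB i h1 h2)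
  have hdB : ∀ i j, 1 ≤ i → i ≤ j → j ≤ m →
      dist (y i) (y j) + dist (y j) b = dist (y i) b := fun i j h1 h2 h3 =>
    dist_add_dist_eq_iff.2 (horderB i j h1 h2 h3)
  have hx : 0 < dist a (y 1) := dist_pos.2 hay
  have hmb : 0 < dist (y m) b := dist_pos.2 hyb
  have hib : ∀ i, 1 ≤ i → i ≤ m → 0 < dist (y i) b := by
    intro i h1 h2
    have := hdB i m h1 h2 le_rfl
    have := dist_nonneg (x := y i) (y := y m)
    linarith
  have main : ∀ k, 1 ≤ k → k ≤ m →
      ∑ i ∈ Finset.Ico 1 k,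
          dist a b * dist (y i) (y (i + 1)) / (dist a (y i) * dist (y (i + 1)) b) ≤
        dist a b * dist (y 1) (y k) / (dist a (y 1) * dist (y k) b) := by
    intro k
    induction k with
    | zero => intro h; omega
    | succ k ih =>
      intro h1 hk
      rcases Nat.lt_or_ge 1 (k + 1) with hlt | hle
      · have hk1 : 1 ≤ k := by omega
        have hkm : k ≤ m := by omega
        have hk1m : k + 1 ≤ m := hk
        rw [Finset.sum_Ico_succ_top hk1]
        have IH := ih hk1 hkm
        have e1 : dist (y 1) (y k) = dist a (y k) - dist a (y 1) := by
          have := hdA 1 k le_rfl hk1 hkm; linarith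
        have e2 : dist (y k) (y (k + 1)) = dist a (y (k + 1)) - dist a (y k) := by
          have := hdA k (k + 1) hk1 (Nat.le_succ k) hk1m; linarith
        have e3 : dist (y 1) (y (k + 1)) = dist a (y (k + 1)) - dist a (y 1) := by
          have := hdA 1 (k + 1) le_rfl (by omega) hk1m; linarith
        have f1 : dist (y k) b = dist a b - dist a (y k) := by
          have := hdAB k hk1 hkm; linarith
        have f2 : dist (y (k + 1)) b = dist a b - dist a (y (k + 1)) := by
          have := hdAB (k + 1) (by omega) hk1m; linarith
        have hxy : dist a (y 1) ≤ dist a (y k) := by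
          have := hdA 1 k le_rfl hk1 hkm
          have := dist_nonneg (x := y 1) (y := y k); linarith
        have hyz : dist a (y k) ≤ dist a (y (k + 1)) := by
          have := hdA k (k + 1) hk1 (Nat.le_succ k) hk1m
          have := dist_nonneg (x := y k) (y := y (k + 1)); linarith
        have hzL : dist a (y (k + 1)) < dist a b := by
          have := hib (k + 1) (by omega) hk1m; linarith
        have key := key_ineq (dist a b) (dist a (y 1)) (dist a (y k))
          (dist a (y (k + 1))) hx hxy hyz hzL
        rw [e1, f1] at IH
        rw [e2, e3, f2]
        linarith
      · have hk0 : k = 0 := by omega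
        subst hk0
        simp
  exact main m hm le_rfl
end

section
/- Let Ω ⊆ ℝⁿ be a compact convex body with nonempty interior and Σ ⊆ ℝⁿ a nonempty open bounded connected set. Let g : Ω → closure(Σ) be a homeomorphism mapping the interior of Ω onto Σ and ∂Ω onto ∂Σ, such that |g(x)−g(y)| ≤ L_Σ|x−y| for all x,y ∈ Ω and |g⁻¹(u)−g⁻¹(v)| ≤ L_Ω|u−v| for all u,v ∈ closure(Σ). Let ε > 0 and let R > 0 be a constant with R(1+8R) ≥ 2/3 such that for every triple of collinear points a, x, b with a, b ∈ ∂Ω, x ∈ Ω^ε ∩ [a,b] and |x−b| ≤ |x−a|, and every c ∈ ∂Ω, one has |x−b| ≤ R·|x−c|. Then for all distinct x₁, x₂ ∈ Ω^ε such that the segment [g(x₁), g(x₂)] ⊆ Σ, one has d_Σ(g(x₁), g(x₂)) ≤ 4 L_Σ² L_Ω² R (1+2R) · d_Ω(x₁, x₂). -/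
/-- The closure of the connected component of `ℓ(u,v) ∩ S` containing `u` is the
segment `[a, b]`, with the endpoints labeled so that `a, u, v, b` occur in this order. -/
def chordEndpoints (n : ℕ) (S : Set (EuclideanSpace ℝ (Fin n)))
    (u v a b : EuclideanSpace ℝ (Fin n)) : Prop :=
  closure (connectedComponentIn
      ((affineSpan ℝ {u, v} : AffineSubspace ℝ (EuclideanSpace ℝ (Fin n))) ∩ S) u) =
      segment ℝ a b ∧
    Wbtw ℝ a u v ∧ Wbtw ℝ u v b

set_option maxHeartbeats 1000000


open AffineMap Set Metric

lemma wbtw_aux {V : Type*} [NormedAddCommGroup V] [NormedSpace ℝ V] {a x y b : V}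
    (h₁ : Wbtw ℝ a x y) (h₂ : Wbtw ℝ x y b) (hxy : x ≠ y) : Wbtw ℝ a x b := by
  obtain ⟨r₁, hr₁, ha⟩ := h₁.left_mem_image_Ici_of_right_ne (Ne.symm hxy)
  obtain ⟨r₂, hr₂, hb⟩ := h₂.right_mem_image_Ici_of_left_ne hxy
  have ha' : a = (1 - r₁) • (y -ᵥ x) +ᵥ x := by
    rw [← ha, ← AffineMap.lineMap_apply_one_sub, AffineMap.lineMap_apply]
  have hb' : b = r₂ • (y -ᵥ x) +ᵥ x := by rw [← hb, AffineMap.lineMap_apply]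
  rw [ha', hb']
  exact wbtw_smul_vadd_smul_vadd_of_nonpos_of_nonneg x (y -ᵥ x)
    (by have := mem_Ici.1 hr₁; linarith) (by have := mem_Ici.1 hr₂; linarith)

lemma left_endpoint_frontier {n : ℕ} {S : Set (EuclideanSpace ℝ (Fin n))} (hSopen : IsOpen S)
    {u v a b : EuclideanSpace ℝ (Fin n)} (hu : u ∈ S) (huv : u ≠ v)
    (hcl : closure (connectedComponentIn
      ((affineSpan ℝ {u, v} : AffineSubspace ℝ (EuclideanSpace ℝ (Fin n))) ∩ S) u) =
        segment ℝ a b)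
    (hauv : Wbtw ℝ a u v) (huvb : Wbtw ℝ u v b) : a ∈ frontier S := by
  set F : Set (EuclideanSpace ℝ (Fin n)) :=
    ((affineSpan ℝ {u, v} : AffineSubspace ℝ (EuclideanSpace ℝ (Fin n))) : Set _) ∩ S with hF
  set C := connectedComponentIn F u with hCdef
  have huL : u ∈ affineSpan ℝ ({u, v} : Set (EuclideanSpace ℝ (Fin n))) :=
    left_mem_affineSpan_pair ℝ u v
  have hvL : v ∈ affineSpan ℝ ({u, v} : Set (EuclideanSpace ℝ (Fin n))) :=
    right_mem_affineSpan_pair ℝ u v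
  have huF : u ∈ F := ⟨huL, hu⟩
  have huC : u ∈ C := mem_connectedComponentIn huF
  have hCF : C ⊆ F := connectedComponentIn_subset F u
  have haclC : a ∈ closure C := hcl ▸ left_mem_segment ℝ a b
  have haclS : a ∈ closure S := closure_mono (hCF.trans Set.inter_subset_right) haclC
  rw [frontier, hSopen.interior_eq]
  refine ⟨haclS, fun haS => ?_⟩
  -- coordinates on the line
  obtain ⟨r₁, hr₁, haeq⟩ := hauv.left_mem_image_Ici_of_right_ne (Ne.symm huv)
  obtain ⟨β, hβ, hbeq⟩ := huvb.right_mem_image_Ici_of_left_ne huv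
  have haeq' : AffineMap.lineMap u v (1 - r₁) = a := by
    rw [AffineMap.lineMap_apply_one_sub]; exact haeq
  set α : ℝ := 1 - r₁ with hαdef
  have hα : α ≤ 0 := by have := mem_Ici.1 hr₁; simp [hαdef]; linarith
  have hβ1 : (1:ℝ) ≤ β := mem_Ici.1 hβ
  have hD : 0 < dist u v := dist_pos.2 huv
  have haL : a ∈ affineSpan ℝ ({u, v} : Set (EuclideanSpace ℝ (Fin n))) := by
    rw [← haeq']; exact AffineMap.lineMap_mem _ huL hvL
  have haF : a ∈ F := ⟨haL, haS⟩
  have haC : a ∈ C := by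
    have hins : IsPreconnected (insert a C) :=
      isPreconnected_connectedComponentIn.subset_closure (Set.subset_insert a C)
        (Set.insert_subset_iff.2 ⟨haclC, subset_closure⟩)
    exact hins.subset_connectedComponentIn (Set.mem_insert_of_mem a huC)
      (Set.insert_subset_iff.2 ⟨haF, hCF⟩) (Set.mem_insert a C)
  obtain ⟨r, hr0, hball⟩ := Metric.isOpen_iff.1 hSopen a haS
  set t : ℝ := r / (2 * dist u v) with htdef
  have ht : 0 < t := by positivity
  set w := AffineMap.lineMap u v (α - t) with hwdef
  have hwa : dist w a = t * dist u v := by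
    rw [hwdef, ← haeq', dist_lineMap_lineMap]
    congr 1
    rw [Real.dist_eq, show α - t - α = -t by ring, abs_neg, abs_of_pos ht]
  have htD : t * dist u v = r / 2 := by
    rw [htdef]; field_simp
  have hwball : w ∈ Metric.ball a r := by
    rw [Metric.mem_ball, hwa, htD]; linarith
  have hwL : w ∈ affineSpan ℝ ({u, v} : Set (EuclideanSpace ℝ (Fin n))) :=
    AffineMap.lineMap_mem _ huL hvL
  have hsegsub : segment ℝ a w ⊆ F := fun z hz =>
    ⟨(affineSpan ℝ ({u, v} : Set (EuclideanSpace ℝ (Fin n)))).convex.segment_subset haL hwL hz,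
      hball ((convex_ball a r).segment_subset (Metric.mem_ball_self hr0) hwball hz)⟩
  have hwC : w ∈ C := by
    have hun : IsPreconnected (C ∪ segment ℝ a w) :=
      IsPreconnected.union a haC (left_mem_segment ℝ a w)
        isPreconnected_connectedComponentIn (convex_segment a w).isPreconnected
    exact hun.subset_connectedComponentIn (Or.inl huC)
      (Set.union_subset hCF hsegsub) (Or.inr (right_mem_segment ℝ a w))
  have hwseg : w ∈ segment ℝ a b := hcl ▸ subset_closure hwC
  have hsum := dist_add_dist_of_mem_segment hwseg
  have h1 : dist a w = t * dist u v := by rw [dist_comm]; exact hwa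
  have h2 : dist w b = (β - (α - t)) * dist u v := by
    rw [hwdef, ← hbeq, dist_lineMap_lineMap]
    congr 1
    rw [Real.dist_eq, abs_of_nonpos (by linarith)]; ring
  have h3 : dist a b = (β - α) * dist u v := by
    rw [← haeq', ← hbeq, dist_lineMap_lineMap]
    congr 1
    rw [Real.dist_eq, abs_of_nonpos (by linarith)]; ring
  nlinarith [hsum, h1, h2, h3, hD, ht]


lemma final_ineq (A B d R LS LΩ P Q duv dab : ℝ)
    (hA : 0 < A) (hB : 0 < B) (hd : 0 < d) (hR : 0 < R)
    (hLS : 0 < LS) (hLΩ : 0 < LΩ) (hK : 1 ≤ LS * LΩ)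
    (hP : 0 < P) (hQ : 0 < Q) (hduv : 0 < duv)
    (htri : dab ≤ P + duv + Q)
    (hd1 : duv ≤ LS * d)
    (hp : min A (d + B) ≤ R * (LΩ * P))
    (hq : min (A + d) B ≤ R * (LΩ * Q)) :
    dab * duv / (P * Q) ≤
      4 * LS ^ 2 * LΩ ^ 2 * R * (1 + 2 * R) * ((A + d + B) * d / (A * B)) := by
  have hABs : A ≤ A + d + B := by linarith
  have hBs : B ≤ A + d + B := by linarith
  have hds : d ≤ A + d + B := by linarith
  obtain ⟨W1, W2, W3⟩ : A * B ≤ (R * (LΩ * Q)) * (A + d + B) ∧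
      A * B ≤ (R * (LΩ * P)) * (A + d + B) ∧
      d * (A * B) ≤ (R * (LΩ * P)) * ((R * (LΩ * Q)) * (A + d + B)) := by
    rcases le_total A (d + B) with h₁ | h₁ <;> rcases le_total (A + d) B with h₂ | h₂
    · -- A ≤ d+B, A+d ≤ B
      rw [min_eq_left h₁] at hp
      rw [min_eq_left h₂] at hq
      refine ⟨?_, ?_, ?_⟩
      · have e := mul_le_mul_of_nonneg_right (show A ≤ R * (LΩ * Q) by linarith) hB.le
        have e' := mul_le_mul_of_nonneg_left hBs (show (0:ℝ) ≤ R * (LΩ * Q) by positivity)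
        linarith
      · have e := mul_le_mul_of_nonneg_right hp hB.le
        have e' := mul_le_mul_of_nonneg_left hBs (show (0:ℝ) ≤ R * (LΩ * P) by positivity)
        linarith
      · have e1 : A * d ≤ (R * (LΩ * P)) * (R * (LΩ * Q)) :=
          mul_le_mul hp (by linarith) hd.le (by positivity)
        have e2 := mul_le_mul_of_nonneg_right e1 hB.le
        have e3 := mul_le_mul_of_nonneg_left hBs
          (show (0:ℝ) ≤ (R * (LΩ * P)) * (R * (LΩ * Q)) by positivity)
        linarith [e2, e3]
    · -- A ≤ d+B, B ≤ A+d
      rw [min_eq_left h₁] at hp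
      rw [min_eq_right h₂] at hq
      refine ⟨?_, ?_, ?_⟩
      · have e := mul_le_mul_of_nonneg_left hq hA.le
        have e' := mul_le_mul_of_nonneg_right hABs (show (0:ℝ) ≤ R * (LΩ * Q) by positivity)
        linarith
      · have e := mul_le_mul_of_nonneg_right hp hB.le
        have e' := mul_le_mul_of_nonneg_left hBs (show (0:ℝ) ≤ R * (LΩ * P) by positivity)
        linarith
      · have e1 : A * B ≤ (R * (LΩ * P)) * (R * (LΩ * Q)) :=
          mul_le_mul hp hq hB.le (by positivity)
        have e2 := mul_le_mul_of_nonneg_left e1 hd.le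
        have e3 := mul_le_mul_of_nonneg_right hds
          (show (0:ℝ) ≤ (R * (LΩ * P)) * (R * (LΩ * Q)) by positivity)
        linarith [e2, e3]
    · -- d+B ≤ A, A+d ≤ B : impossible
      exfalso; linarith
    · -- d+B ≤ A, B ≤ A+d
      rw [min_eq_right h₁] at hp
      rw [min_eq_right h₂] at hq
      refine ⟨?_, ?_, ?_⟩
      · have e := mul_le_mul_of_nonneg_left hq hA.le
        have e' := mul_le_mul_of_nonneg_right hABs (show (0:ℝ) ≤ R * (LΩ * Q) by positivity)
        linarith
      · have e := mul_le_mul_of_nonneg_left (show B ≤ R * (LΩ * P) by linarith) hA.le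
        have e' := mul_le_mul_of_nonneg_right hABs (show (0:ℝ) ≤ R * (LΩ * P) by positivity)
        linarith
      · have e1 : d * B ≤ (R * (LΩ * P)) * (R * (LΩ * Q)) :=
          mul_le_mul (by linarith) hq hB.le (by positivity)
        have e2 := mul_le_mul_of_nonneg_left e1 hA.le
        have e3 := mul_le_mul_of_nonneg_right hABs
          (show (0:ℝ) ≤ (R * (LΩ * P)) * (R * (LΩ * Q)) by positivity)
        linarith [e2, e3]
  rw [show 4 * LS ^ 2 * LΩ ^ 2 * R * (1 + 2 * R) * ((A + d + B) * d / (A * B)) =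
      4 * LS ^ 2 * LΩ ^ 2 * R * (1 + 2 * R) * ((A + d + B) * d) / (A * B) by ring]
  rw [div_le_div_iff₀ (by positivity) (by positivity)]
  have S1 : duv * (A * B) ≤ (LS * d) * ((R * (LΩ * Q)) * (A + d + B)) := by
    have e := mul_le_mul_of_nonneg_right hd1 (show (0:ℝ) ≤ A * B by positivity)
    have e' := mul_le_mul_of_nonneg_left W1 (show (0:ℝ) ≤ LS * d by positivity)
    linarith
  have S3 : duv * (A * B) ≤ (LS * d) * ((R * (LΩ * P)) * (A + d + B)) := by
    have e := mul_le_mul_of_nonneg_right hd1 (show (0:ℝ) ≤ A * B by positivity)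
    have e' := mul_le_mul_of_nonneg_left W2 (show (0:ℝ) ≤ LS * d by positivity)
    linarith
  have S2 : (duv * duv) * (A * B) ≤
      (LS * LS * d) * ((R * (LΩ * P)) * ((R * (LΩ * Q)) * (A + d + B))) := by
    have e0 : duv * duv ≤ (LS * d) * (LS * d) := mul_le_mul hd1 hd1 hduv.le (by positivity)
    have e1 := mul_le_mul_of_nonneg_right e0 (show (0:ℝ) ≤ A * B by positivity)
    have e2 := mul_le_mul_of_nonneg_left W3 (show (0:ℝ) ≤ LS * LS * d by positivity)
    linarith [e1, e2]
  have T := mul_le_mul_of_nonneg_right htri (show (0:ℝ) ≤ duv * (A * B) by positivity)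
  have TP := mul_le_mul_of_nonneg_left S1 hP.le
  have TQ := mul_le_mul_of_nonneg_left S3 hQ.le
  have hc : (2 * (LS * LΩ * R) + (LS * LΩ * R) * (LS * LΩ * R)) * (d * ((A + d + B) * (P * Q))) ≤
      (4 * LS ^ 2 * LΩ ^ 2 * R * (1 + 2 * R)) * (d * ((A + d + B) * (P * Q))) := by
    apply mul_le_mul_of_nonneg_right _ (by positivity)
    nlinarith [mul_nonneg (mul_nonneg (sub_nonneg.2 hK) hR.le) (mul_pos hLS hLΩ).le,
      sq_nonneg (LS * LΩ * R), mul_pos (mul_pos hLS hLΩ) hR]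
  linarith [T, TP, TQ, S2, hc]

/-- the visible-case inequality (init-ineq) in the proof of Lemma 7.
If `g : Ω → closure S` is a bilipschitz homeomorphism from a compact convex body `Ω`
onto the closure of an open bounded connected set `S`, mapping `interior Ω` onto `S`
and `∂Ω` onto `∂S`, and `R` satisfies the chord-ratio bound for `Ω^ε` with
`R(1+8R) ≥ 2/3`, then for all distinct `x₁, x₂ ∈ Ω^ε` whose images see each other
(`[g x₁, g x₂] ⊆ S`), one has `d_S(g x₁, g x₂) ≤ 4 L_S² L_Ω² R (1+2R) · d_Ω(x₁, x₂)`. -/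
theorem stmt_3 (n : ℕ) (Ω S : Set (EuclideanSpace ℝ (Fin n)))
    (hcomp : IsCompact Ω) (hconv : Convex ℝ Ω) (hintΩ : (interior Ω).Nonempty)
    (hSne : S.Nonempty) (hSopen : IsOpen S) (hSbdd : Bornology.IsBounded S)
    (hSconn : IsConnected S)
    (LS LΩ : ℝ) (g : EuclideanSpace ℝ (Fin n) → EuclideanSpace ℝ (Fin n))
    (hbij : Set.BijOn g Ω (closure S))
    (hgint : g '' interior Ω = S)
    (hgfr : g '' frontier Ω = frontier S)
    (hLip : ∀ x ∈ Ω, ∀ y ∈ Ω, dist (g x) (g y) ≤ LS * dist x y)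
    (hLipInv : ∀ x ∈ Ω, ∀ y ∈ Ω, dist x y ≤ LΩ * dist (g x) (g y))
    (ε : ℝ) (hε : 0 < ε) (R : ℝ) (hR : 0 < R) (hR23 : 2 / 3 ≤ R * (1 + 8 * R))
    (hRprop : ∀ a x b c : EuclideanSpace ℝ (Fin n),
      a ∈ frontier Ω → b ∈ frontier Ω → c ∈ frontier Ω →
      x ∈ Ω → ε ≤ Metric.infDist x (frontier Ω) → x ∈ segment ℝ a b →
      dist x b ≤ dist x a → dist x b ≤ R * dist x c)
    (x₁ x₂ : EuclideanSpace ℝ (Fin n))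
    (hx₁Ω : x₁ ∈ Ω) (hx₁ε : ε ≤ Metric.infDist x₁ (frontier Ω))
    (hx₂Ω : x₂ ∈ Ω) (hx₂ε : ε ≤ Metric.infDist x₂ (frontier Ω))
    (hne : x₁ ≠ x₂)
    (hsee : segment ℝ (g x₁) (g x₂) ⊆ S)
    (aΩ bΩ : EuclideanSpace ℝ (Fin n))
    (haΩ : aΩ ∈ frontier Ω) (hbΩ : bΩ ∈ frontier Ω)
    (hord₁ : Wbtw ℝ aΩ x₁ x₂) (hord₂ : Wbtw ℝ x₁ x₂ bΩ)
    (aS bS : EuclideanSpace ℝ (Fin n))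
    (hchord : chordEndpoints n S (g x₁) (g x₂) aS bS) :
    dist aS bS * dist (g x₁) (g x₂) / (dist aS (g x₁) * dist (g x₂) bS) ≤
      4 * LS ^ 2 * LΩ ^ 2 * R * (1 + 2 * R) *
        (dist aΩ bΩ * dist x₁ x₂ / (dist aΩ x₁ * dist x₂ bΩ)) := by
  obtain ⟨hcl, hWa1, hWb1⟩ := hchord
  -- interior membership
  have hnotfr : ∀ x : EuclideanSpace ℝ (Fin n),
      ε ≤ Metric.infDist x (frontier Ω) → x ∉ frontier Ω := by
    intro x hxε hf
    have h0 := Metric.infDist_zero_of_mem hf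
    linarith
  have hx₁int : x₁ ∈ interior Ω := by
    by_contra h
    exact hnotfr x₁ hx₁ε (by rw [hcomp.isClosed.frontier_eq]; exact ⟨hx₁Ω, h⟩)
  have hx₂int : x₂ ∈ interior Ω := by
    by_contra h
    exact hnotfr x₂ hx₂ε (by rw [hcomp.isClosed.frontier_eq]; exact ⟨hx₂Ω, h⟩)
  have hfrΩ : frontier Ω ⊆ Ω := by
    intro z hz
    have := frontier_subset_closure hz
    rwa [hcomp.isClosed.closure_eq] at this
  have hu : g x₁ ∈ S := hgint ▸ ⟨x₁, hx₁int, rfl⟩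
  have hv : g x₂ ∈ S := hgint ▸ ⟨x₂, hx₂int, rfl⟩
  have huv : g x₁ ≠ g x₂ := fun h => hne (hbij.injOn hx₁Ω hx₂Ω h)
  have hduv : 0 < dist (g x₁) (g x₂) := dist_pos.2 huv
  have hd : 0 < dist x₁ x₂ := dist_pos.2 hne
  have hL1 := hLip x₁ hx₁Ω x₂ hx₂Ω
  have hL2 := hLipInv x₁ hx₁Ω x₂ hx₂Ω
  have hLS : 0 < LS := by nlinarith
  have hLΩ : 0 < LΩ := by nlinarith
  have hK : 1 ≤ LS * LΩ := by nlinarith [mul_le_mul_of_nonneg_left hL1 hLΩ.le]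
  -- positivity of boundary distances
  have hA : 0 < dist aΩ x₁ :=
    dist_pos.2 (fun h => hnotfr x₁ hx₁ε (h ▸ haΩ))
  have hB : 0 < dist x₂ bΩ :=
    dist_pos.2 (fun h => hnotfr x₂ hx₂ε (by rw [h]; exact hbΩ))
  -- betweenness
  have hWa : Wbtw ℝ aΩ x₁ bΩ := wbtw_aux hord₁ hord₂ hne
  have hWb : Wbtw ℝ aΩ x₂ bΩ := (wbtw_aux hord₂.symm hord₁.symm (Ne.symm hne)).symm
  have hda1 : dist aΩ x₁ + dist x₁ x₂ = dist aΩ x₂ := hord₁.dist_add_dist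
  have hda2 : dist x₁ x₂ + dist x₂ bΩ = dist x₁ bΩ := hord₂.dist_add_dist
  have hdab : dist aΩ x₁ + dist x₁ bΩ = dist aΩ bΩ := hWa.dist_add_dist
  -- min bounds from hRprop
  have hmin₁ : ∀ c ∈ frontier Ω,
      min (dist x₁ aΩ) (dist x₁ bΩ) ≤ R * dist x₁ c := by
    intro c hc
    rcases le_total (dist x₁ aΩ) (dist x₁ bΩ) with h | h
    · exact (min_le_left _ _).trans
        (hRprop bΩ x₁ aΩ c hbΩ haΩ hc hx₁Ω hx₁ε (mem_segment_iff_wbtw.2 hWa.symm) h)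
    · exact (min_le_right _ _).trans
        (hRprop aΩ x₁ bΩ c haΩ hbΩ hc hx₁Ω hx₁ε (mem_segment_iff_wbtw.2 hWa) h)
  have hmin₂ : ∀ c ∈ frontier Ω,
      min (dist x₂ aΩ) (dist x₂ bΩ) ≤ R * dist x₂ c := by
    intro c hc
    rcases le_total (dist x₂ aΩ) (dist x₂ bΩ) with h | h
    · exact (min_le_left _ _).trans
        (hRprop bΩ x₂ aΩ c hbΩ haΩ hc hx₂Ω hx₂ε (mem_segment_iff_wbtw.2 hWb.symm) h)
    · exact (min_le_right _ _).trans
        (hRprop aΩ x₂ bΩ c haΩ hbΩ hc hx₂Ω hx₂ε (mem_segment_iff_wbtw.2 hWb) h)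
  -- endpoints on the frontier of S
  have haSfr : aS ∈ frontier S := left_endpoint_frontier hSopen hu huv hcl hWa1 hWb1
  have hvC : g x₂ ∈ connectedComponentIn
      ((affineSpan ℝ {g x₁, g x₂} : AffineSubspace ℝ (EuclideanSpace ℝ (Fin n))) ∩ S)
      (g x₁) := by
    refine (convex_segment (g x₁) (g x₂)).isPreconnected.subset_connectedComponentIn
      (left_mem_segment ℝ _ _) ?_ (right_mem_segment ℝ _ _)
    exact Set.subset_inter
      ((affineSpan ℝ ({g x₁, g x₂} : Set (EuclideanSpace ℝ (Fin n)))).convex.segment_subset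
        (left_mem_affineSpan_pair ℝ _ _) (right_mem_affineSpan_pair ℝ _ _)) hsee
  have hcl₂ : closure (connectedComponentIn
      ((affineSpan ℝ {g x₂, g x₁} : AffineSubspace ℝ (EuclideanSpace ℝ (Fin n))) ∩ S)
      (g x₂)) = segment ℝ bS aS := by
    rw [Set.pair_comm (g x₂) (g x₁), ← connectedComponentIn_eq hvC, hcl, segment_symm]
  have hbSfr : bS ∈ frontier S :=
    left_endpoint_frontier hSopen hv (Ne.symm huv) hcl₂ hWb1.symm hWa1.symm
  have haSnotS : aS ∉ S := fun hmem => haSfr.2 (by rw [hSopen.interior_eq]; exact hmem)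
  have hbSnotS : bS ∉ S := fun hmem => hbSfr.2 (by rw [hSopen.interior_eq]; exact hmem)
  have hP : 0 < dist aS (g x₁) := dist_pos.2 (fun h => haSnotS (h ▸ hu))
  have hQ : 0 < dist (g x₂) bS := dist_pos.2 (fun h => hbSnotS (by rw [← h]; exact hv))
  -- pull endpoints back to frontier Ω
  rw [← hgfr] at haSfr hbSfr
  obtain ⟨a', ha'fr, ha'eq⟩ := haSfr
  obtain ⟨b', hb'fr, hb'eq⟩ := hbSfr
  have keyP : min (dist aΩ x₁) (dist x₁ x₂ + dist x₂ bΩ) ≤ R * (LΩ * dist aS (g x₁)) := by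
    have h := hmin₁ a' ha'fr
    have hg : dist x₁ a' ≤ LΩ * dist aS (g x₁) := by
      have h2 := hLipInv x₁ hx₁Ω a' (hfrΩ ha'fr)
      rwa [ha'eq, dist_comm (g x₁) aS] at h2
    rw [dist_comm aΩ x₁, hda2]
    exact h.trans (mul_le_mul_of_nonneg_left hg hR.le)
  have keyQ : min (dist aΩ x₁ + dist x₁ x₂) (dist x₂ bΩ) ≤ R * (LΩ * dist (g x₂) bS) := by
    have h := hmin₂ b' hb'fr
    have hg : dist x₂ b' ≤ LΩ * dist (g x₂) bS := by
      have h2 := hLipInv x₂ hx₂Ω b' (hfrΩ hb'fr)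
      rwa [hb'eq] at h2
    rw [show dist aΩ x₁ + dist x₁ x₂ = dist x₂ aΩ by rw [dist_comm x₂ aΩ]; exact hda1]
    exact h.trans (mul_le_mul_of_nonneg_left hg hR.le)
  have htri : dist aS bS ≤ dist aS (g x₁) + dist (g x₁) (g x₂) + dist (g x₂) bS := by
    linarith [dist_triangle aS (g x₁) bS, dist_triangle (g x₁) (g x₂) bS]
  have habΩ : dist aΩ bΩ = dist aΩ x₁ + dist x₁ x₂ + dist x₂ bΩ := by
    rw [← hdab, ← hda2]; ring
  rw [habΩ]
  exact final_ineq (dist aΩ x₁) (dist x₂ bΩ) (dist x₁ x₂) R LS LΩ (dist aS (g x₁))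
    (dist (g x₂) bS) (dist (g x₁) (g x₂)) (dist aS bS) hA hB hd hR hLS hLΩ hK hP hQ hduv
    htri hL1 keyP keyQ
end

section
/- Let u, v, x ∈ ℝⁿ be affinely independent points. Let y, z ∈ ℝⁿ be such that y, u, v, z are collinear and occur in this order with y ≠ u, u ≠ v, v ≠ z; let p', q' ∈ ℝⁿ be such that p', u, x, q' are collinear and occur in this order with p' ≠ u and u ≠ x; let i ∈ ℝⁿ be such that i, v, x are collinear and occur in this order with i ≠ v and v ≠ x; and suppose y, i, p' are collinear. Let d = (|y−z|·|u−v|)/(|y−u|·|v−z|) and assume d·|p'−q'| ≤ (1/2)·|x−u|. Then |v−i| ≤ 2·(|x−v|/|x−u|)·|u−p'|. -/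
/-!
Write `y = u + a (u - v)`, `z = v + c (v - u)`, `p' = u + b (u - x)`, `q' = x + e (x - u)` and
`i = v + s (v - x)` with `a, b, c, e, s ≥ 0`. Then `d = (1 + a + c) / (a c)` and
`|p' - q'| = (1 + b + e) |x - u|`, so the hypothesis on `d` forces `a ≥ 1 + 2 b`. Expanding the
collinearity of `y, i, p'` in the basis `v - u, x - u` gives Menelaus' relation
`s a = b (s + 1 + a)`, i.e. `s = b (1 + a) / (a - b) ≤ 2 b`, and `|v - i| = s |x - v|`,
`|u - p'| = b |x - u|`.
-/

theorem AffineIndependent.linearIndependent_vsub_vsub {k V P : Type*} [Ring k] [AddCommGroup V]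
    [Module k V] [AddTorsor V P] {u v x : P} (h : AffineIndependent k ![u, v, x]) :
    LinearIndependent k ![v -ᵥ u, x -ᵥ u] := by
  rw [affineIndependent_iff_linearIndependent_vsub k _ (0 : Fin 3)] at h
  convert h.comp _ (finSuccAboveEquiv (0 : Fin 3)).injective
  ext j; fin_cases j <;> rfl

theorem Wbtw.exists_nonneg_smul_vsub {R V P : Type*} [Field R] [LinearOrder R]
    [IsStrictOrderedRing R] [AddCommGroup V] [Module R V] [AddTorsor V P] {p q r : P}
    (h : Wbtw R p q r) (hpq : p ≠ q) : ∃ t : R, 0 ≤ t ∧ r -ᵥ q = t • (q -ᵥ p) :=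
  ((wbtw_iff_sameRay_vsub.1 h).exists_nonneg_left (vsub_ne_zero.2 hpq.symm)).imp
    fun _ ⟨ht, h⟩ => ⟨ht, h.symm⟩

section Distances

variable {E : Type*} [NormedAddCommGroup E] [NormedSpace ℝ E]

theorem dist_eq_mul_dist_of_sub_eq_smul {p q r : E} {t : ℝ} (ht : 0 ≤ t)
    (h : p - q = t • (q - r)) : dist p q = t * dist q r := by
  rw [dist_eq_norm, h, norm_smul, Real.norm_of_nonneg ht, dist_eq_norm]

theorem dist_eq_one_add_add_mul_dist {y u v z : E} {a c : ℝ} (ha : 0 ≤ a) (hc : 0 ≤ c)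
    (hy : y - u = a • (u - v)) (hz : z - v = c • (v - u)) :
    dist y z = (1 + a + c) * dist u v := by
  rw [dist_eq_norm, dist_eq_norm, ← Real.norm_of_nonneg (by positivity : 0 ≤ 1 + a + c),
    ← norm_smul]
  congr 1
  linear_combination (norm := module) hy - hz

theorem cross_ratio_eq_of_sub_eq_smul {y u v z : E} {a c : ℝ} (ha : 0 ≤ a) (hc : 0 ≤ c)
    (huv : u ≠ v) (hy : y - u = a • (u - v)) (hz : z - v = c • (v - u)) :
    dist y z * dist u v / (dist y u * dist v z) = (1 + a + c) / (a * c) := by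
  have huv' : dist u v ≠ 0 := dist_ne_zero.2 huv
  rw [dist_eq_one_add_add_mul_dist ha hc hy hz, dist_eq_mul_dist_of_sub_eq_smul ha hy,
    dist_comm v, dist_eq_mul_dist_of_sub_eq_smul hc hz, dist_comm v]
  field_simp

end Distances

theorem Collinear.menelaus {k V : Type*} [Field k] [AddCommGroup V] [Module k V]
    {u v x y p i : V} {a b s : k} (hcol : Collinear k {y, i, p})
    (hind : LinearIndependent k ![v - u, x - u]) (hy : y - u = a • (u - v))
    (hp : p - u = b • (u - x)) (hi : i - v = s • (v - x)) (ha : a ≠ 0) :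
    s * a = b * (s + 1 + a) := by
  have hcoord := LinearIndependent.pair_iff.1 hind
  have hpy : p - y = a • (v - u) + (-b) • (x - u) := by
    rw [← sub_sub_sub_cancel_right p y u, hp, hy]; module
  have hpy0 : p ≠ y := by
    intro h
    rw [h, sub_self] at hpy
    exact ha (hcoord _ _ hpy.symm).1
  obtain ⟨r, hr⟩ := mem_affineSpan_pair_iff_exists_lineMap_eq.1 <|
    hcol.mem_affineSpan_of_mem_of_ne (by simp) (by simp) (by simp : i ∈ _) hpy0.symm
  rw [AffineMap.lineMap_apply, vsub_eq_sub, vadd_eq_add, ← eq_sub_iff_add_eq, hpy] at hr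
  have hiy : i - y = (s + 1 + a) • (v - u) + (-s) • (x - u) := by
    rw [show i - y = (i - v) + (v - u) - (y - u) by abel, hi, hy]; module
  have hrel : (s + 1 + a - r * a) • (v - u) + (r * b - s) • (x - u) = 0 := by
    linear_combination (norm := module) -hiy - hr
  obtain ⟨h₁, h₂⟩ := hcoord _ _ hrel
  linear_combination (-a) * h₂ - b * h₁

theorem le_two_mul_of_menelaus {k : Type*} [Field k] [LinearOrder k] [IsStrictOrderedRing k]
    {a b c e s : k} (ha : 0 < a) (hb : 0 ≤ b) (hc : 0 < c) (he : 0 ≤ e)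
    (hd : (1 + a + c) / (a * c) * (1 + b + e) ≤ 1 / 2) (hs : s * a = b * (s + 1 + a)) :
    s ≤ 2 * b := by
  have hd' : 2 * ((1 + a + c) * (1 + b + e)) ≤ a * c := by
    rw [div_mul_eq_mul_div, div_le_iff₀ (by positivity)] at hd
    linarith
  have hab : 1 + 2 * b ≤ a := by nlinarith [mul_nonneg hc.le (add_nonneg hb he)]
  nlinarith [mul_nonneg hb (sub_nonneg.2 hab)]

theorem stmt_8_general (n : ℕ) (u v x y z p' q' i : EuclideanSpace ℝ (Fin n))
    (hindep : AffineIndependent ℝ ![u, v, x])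
    (hyuv : Wbtw ℝ y u v) (huvz : Wbtw ℝ u v z)
    (hyu : y ≠ u) (huv : u ≠ v) (hvz : v ≠ z)
    (hpux : Wbtw ℝ p' u x) (huxq : Wbtw ℝ u x q')
    (hux : u ≠ x)
    (hivx : Wbtw ℝ i v x) (hvx : v ≠ x)
    (hcol : Collinear ℝ ({y, i, p'} : Set (EuclideanSpace ℝ (Fin n))))
    (hd : (dist y z * dist u v / (dist y u * dist v z)) * dist p' q' ≤
      (1 / 2) * dist x u) :
    dist v i ≤ 2 * (dist x v / dist x u) * dist u p' := by
  obtain ⟨a, ha, hy⟩ := hyuv.symm.exists_nonneg_smul_vsub huv.symm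
  obtain ⟨c, hc, hz⟩ := huvz.exists_nonneg_smul_vsub huv
  obtain ⟨b, hb, hp⟩ := hpux.symm.exists_nonneg_smul_vsub hux.symm
  obtain ⟨e, he, hq⟩ := huxq.exists_nonneg_smul_vsub hux
  obtain ⟨s, hs, hi⟩ := hivx.symm.exists_nonneg_smul_vsub hvx.symm
  simp only [vsub_eq_sub] at hy hz hp hq hi
  have ha0 : 0 < a := ha.lt_of_ne <| by rintro rfl; simp [sub_eq_zero, hyu] at hy
  have hc0 : 0 < c := hc.lt_of_ne <| by rintro rfl; simp [sub_eq_zero, hvz.symm] at hz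
  have hxu : 0 < dist x u := dist_pos.2 hux.symm
  rw [cross_ratio_eq_of_sub_eq_smul ha hc huv hy hz, dist_eq_one_add_add_mul_dist hb he hp hq,
    dist_comm u x, ← mul_assoc] at hd
  have hsb : s ≤ 2 * b := le_two_mul_of_menelaus ha0 hb hc0 he
    (le_of_mul_le_mul_right hd hxu)
    (hcol.menelaus hindep.linearIndependent_vsub_vsub hy hp hi ha0.ne')
  calc dist v i = s * dist x v := by
        rw [dist_comm v, dist_eq_mul_dist_of_sub_eq_smul hs hi, dist_comm v]
    _ ≤ 2 * b * dist x v := by gcongr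
    _ = 2 * (dist x v / dist x u) * dist u p' := by
        rw [dist_comm u, dist_eq_mul_dist_of_sub_eq_smul hb hp, dist_comm u x]
        field_simp [hxu.ne']

/-- eq. v.i.bound, the Menelaus-based bound in the proof of the total
variation lemma.  With `u, v, x` affinely independent, `y, u, v, z` collinear in this
order, `p', u, x, q'` collinear in this order, `i, v, x` collinear in this order,
`y, i, p'` collinear, and `d·|p'−q'| ≤ (1/2)·|x−u|` where
`d = |y−z|·|u−v|/(|y−u|·|v−z|)`, one has `|v−i| ≤ 2·(|x−v|/|x−u|)·|u−p'|`. -/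
theorem stmt_8 (n : ℕ) (u v x y z p' q' i : EuclideanSpace ℝ (Fin n))
    (hindep : AffineIndependent ℝ ![u, v, x])
    (hyuv : Wbtw ℝ y u v) (huvz : Wbtw ℝ u v z)
    (hyu : y ≠ u) (huv : u ≠ v) (hvz : v ≠ z)
    (hpux : Wbtw ℝ p' u x) (huxq : Wbtw ℝ u x q')
    (hpu : p' ≠ u) (hux : u ≠ x)
    (hivx : Wbtw ℝ i v x) (hiv : i ≠ v) (hvx : v ≠ x)
    (hcol : Collinear ℝ ({y, i, p'} : Set (EuclideanSpace ℝ (Fin n))))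
    (hd : (dist y z * dist u v / (dist y u * dist v z)) * dist p' q' ≤
      (1 / 2) * dist x u) :
    dist v i ≤ 2 * (dist x v / dist x u) * dist u p' :=
  stmt_8_general n u v x y z p' q' i hindep hyuv huvz hyu huv hvz hpux huxq hux hivx hvx hcol hd
end

section
/- Let u, v, x ∈ ℝⁿ be affinely independent points. Let y, z ∈ ℝⁿ be such that y, u, v, z are collinear and occur in this order with y ≠ u, u ≠ v, v ≠ z; let p', q' ∈ ℝⁿ be such that p', u, x, q' are collinear and occur in this order with p' ≠ u, u ≠ x, x ≠ q'; let i, j ∈ ℝⁿ be such that i, v, x, j are collinear and occur in this order with i ≠ v, v ≠ x, x ≠ j. Suppose y, i, p' are collinear and z, q', j are collinear. Let d = (|y−z|·|u−v|)/(|y−u|·|v−z|) and assume d·|p'−q'| ≤ (1/2)·|x−u|. Then |i−v| + |v−x| + |x−j| ≤ 2·(|x−v|/|x−u|)·(|p'−u| + |u−x| + |x−q'|). -/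
private lemma sbtw_param {E : Type*} [NormedAddCommGroup E] [NormedSpace ℝ E]
    {a b c : E} (h : Sbtw ℝ a b c) : ∃ s : ℝ, 0 < s ∧ a - b = s • (b - c) := by
  obtain ⟨t, ht, hb⟩ := h.mem_image_Ioo
  have h1 : (1:ℝ) - t ≠ 0 := by linarith [ht.2]
  refine ⟨t / (1 - t), div_pos ht.1 (by linarith [ht.2]), ?_⟩
  rw [← hb, AffineMap.lineMap_apply_module']
  match_scalars <;> (field_simp; ring_nf; try tauto)

private lemma core_ineq {a c p q m r : ℝ} (ha : 0 < a) (hc : 0 < c) (hp : 0 < p)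
    (hq : 0 < q) (hm : 0 < m) (hr : 0 < r)
    (h1 : m * a = p * (1 + m + a)) (h2 : r * c = q * (1 + c + r))
    (h3 : 2 * ((1 + a + c) * (1 + p + q)) ≤ a * c) :
    1 + m + r ≤ 2 * (1 + p + q) := by
  have hap : 2 * (1 + p) ≤ a := by nlinarith
  have hcq : 2 * (1 + q) ≤ c := by nlinarith
  have hm2 : m ≤ 2 * p := by nlinarith [mul_pos hm hp]
  have hr2 : r ≤ 2 * q := by nlinarith [mul_pos hr hq]
  linarith

set_option maxHeartbeats 1000000 in
/-- the combined chord-length comparison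
`ℓ_𝒞(x,v) ≤ 2(|x−v|/|x−u|)·ℓ_𝒞(x,u)` in the proof of the total variation lemma.
With `u, v, x` affinely independent, `y, u, v, z` collinear in this order,
`p', u, x, q'` collinear in this order, `i, v, x, j` collinear in this order,
`y, i, p'` collinear, `z, q', j` collinear, and `d·|p'−q'| ≤ (1/2)·|x−u|` where
`d = |y−z|·|u−v|/(|y−u|·|v−z|)`, one has
`|i−v| + |v−x| + |x−j| ≤ 2·(|x−v|/|x−u|)·(|p'−u| + |u−x| + |x−q'|)`. -/
theorem stmt_9 (n : ℕ) (u v x y z p' q' i j : EuclideanSpace ℝ (Fin n))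
    (hindep : AffineIndependent ℝ ![u, v, x])
    (hyuv : Wbtw ℝ y u v) (huvz : Wbtw ℝ u v z)
    (hyu : y ≠ u) (huv : u ≠ v) (hvz : v ≠ z)
    (hpux : Wbtw ℝ p' u x) (huxq : Wbtw ℝ u x q')
    (hpu : p' ≠ u) (hux : u ≠ x) (hxq : x ≠ q')
    (hivx : Wbtw ℝ i v x) (hvxj : Wbtw ℝ v x j)
    (hiv : i ≠ v) (hvx : v ≠ x) (hxj : x ≠ j)
    (hcol₁ : Collinear ℝ ({y, i, p'} : Set (EuclideanSpace ℝ (Fin n))))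
    (hcol₂ : Collinear ℝ ({z, q', j} : Set (EuclideanSpace ℝ (Fin n))))
    (hd : (dist y z * dist u v / (dist y u * dist v z)) * dist p' q' ≤
      (1 / 2) * dist x u) :
    dist i v + dist v x + dist x j ≤
      2 * (dist x v / dist x u) * (dist p' u + dist u x + dist x q') := by
  -- betweenness parameters
  obtain ⟨a, ha, hya⟩ := sbtw_param ⟨hyuv, hyu.symm, huv⟩
  obtain ⟨c, hc, hzc⟩ := sbtw_param (Sbtw.symm ⟨huvz, huv.symm, hvz⟩)
  obtain ⟨p, hp, hpp⟩ := sbtw_param ⟨hpux, hpu.symm, hux⟩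
  obtain ⟨q, hq, hqq⟩ := sbtw_param (Sbtw.symm ⟨huxq, hux.symm, hxq⟩)
  obtain ⟨m, hm, hmm⟩ := sbtw_param ⟨hivx, hiv.symm, hvx⟩
  obtain ⟨r, hr, hrr⟩ := sbtw_param (Sbtw.symm ⟨hvxj, hvx.symm, hxj⟩)
  -- linear independence of v - u and x - u
  have key : ∀ α β : ℝ, α • (v - u) + β • (x - u) = 0 → α = 0 ∧ β = 0 := by
    intro α β hαβ
    have hs : Finset.univ.sum ![-α - β, α, β] = 0 := by
      rw [Fin.sum_univ_three]
      simp only [Matrix.cons_val_zero, Matrix.cons_val_one, Matrix.head_cons,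
        Matrix.cons_val_two, Matrix.tail_cons]
      ring
    have hv0 : ∑ e, ![-α - β, α, β] e • ![u, v, x] e = 0 := by
      rw [Fin.sum_univ_three]
      simp only [Matrix.cons_val_zero, Matrix.cons_val_one, Matrix.head_cons,
        Matrix.cons_val_two, Matrix.tail_cons]
      linear_combination (norm := module) hαβ
    have h := affineIndependent_iff.1 hindep Finset.univ _ hs hv0
    exact ⟨by simpa using h 1 (Finset.mem_univ 1), by simpa using h 2 (Finset.mem_univ 2)⟩
  -- coordinate formulas for the relevant differences
  have hiy : i - y = (1 + m + a) • (v - u) + (-m) • (x - u) := by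
    linear_combination (norm := module) hmm - hya
  have hpy : p' - y = a • (v - u) + (-p) • (x - u) := by
    linear_combination (norm := module) hpp - hya
  have hqz : q' - z = (-(1 + c)) • (v - u) + (1 + q) • (x - u) := by
    linear_combination (norm := module) hqq - hzc
  have hjz : j - z = (-(1 + c + r)) • (v - u) + (1 + r) • (x - u) := by
    linear_combination (norm := module) hrr - hzc
  have hpq : p' - q' = (-(1 + p + q)) • (x - u) := by
    linear_combination (norm := module) hpp - hqq
  have hyz : y - z = (-(1 + a + c)) • (v - u) := by
    linear_combination (norm := module) hya - hzc
  -- Menelaus relation 1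
  obtain ⟨w₁, hw₁⟩ := (collinear_iff_of_mem (Set.mem_insert y _)).1 hcol₁
  obtain ⟨ri, hri⟩ := hw₁ i (by simp)
  obtain ⟨rp, hrp⟩ := hw₁ p' (by simp)
  have hri' : i - y = ri • w₁ := by rw [hri]; simp
  have hrp' : p' - y = rp • w₁ := by rw [hrp]; simp
  have hcr : rp • (i - y) = ri • (p' - y) := by
    rw [hri', hrp', smul_smul, smul_smul, mul_comm]
  rw [hiy, hpy] at hcr
  obtain ⟨E1, E2⟩ := key (rp * (1 + m + a) - ri * a) (rp * (-m) - ri * (-p))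
    (by linear_combination (norm := module) hcr)
  have men1 : m * a = p * (1 + m + a) := by
    rcases eq_or_ne rp 0 with h0 | h0
    · exfalso
      rw [h0, zero_smul] at hrp'
      have hz0 := key a (-p) (by rw [← hpy, hrp'])
      exact ha.ne' hz0.1
    · have hk1 : rp * (p * (1 + m + a) - m * a) = 0 := by
        linear_combination p * E1 + a * E2
      have := (mul_eq_zero.mp hk1).resolve_left h0
      linarith
  -- Menelaus relation 2
  obtain ⟨w₂, hw₂⟩ := (collinear_iff_of_mem (Set.mem_insert z _)).1 hcol₂
  obtain ⟨rq, hrq⟩ := hw₂ q' (by simp)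
  obtain ⟨rj, hrj⟩ := hw₂ j (by simp)
  have hrq' : q' - z = rq • w₂ := by rw [hrq]; simp
  have hrj' : j - z = rj • w₂ := by rw [hrj]; simp
  have hcr2 : rj • (q' - z) = rq • (j - z) := by
    rw [hrq', hrj', smul_smul, smul_smul, mul_comm]
  rw [hqz, hjz] at hcr2
  obtain ⟨F1, F2⟩ := key (rj * (-(1 + c)) - rq * (-(1 + c + r)))
    (rj * (1 + q) - rq * (1 + r)) (by linear_combination (norm := module) hcr2)
  have men2 : r * c = q * (1 + c + r) := by
    rcases eq_or_ne rq 0 with h0 | h0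
    · exfalso
      rw [h0, zero_smul] at hrq'
      have hz0 := key (-(1 + c)) (1 + q) (by rw [← hqz, hrq'])
      linarith [hz0.2]
    · have hk2 : rq * ((1 + q) * (1 + c + r) - (1 + c) * (1 + r)) = 0 := by
        linear_combination (1 + q) * F1 + (1 + c) * F2
      have := (mul_eq_zero.mp hk2).resolve_left h0
      linear_combination -this
  -- norms
  have n1 : (0:ℝ) < ‖v - u‖ := by
    rw [norm_pos_iff]; exact sub_ne_zero.mpr huv.symm
  have n2 : (0:ℝ) < ‖x - u‖ := by
    rw [norm_pos_iff]; exact sub_ne_zero.mpr hux.symm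
  have n3 : (0:ℝ) < ‖v - x‖ := by
    rw [norm_pos_iff]; exact sub_ne_zero.mpr hvx
  -- distance computations
  have d1 : dist i v = m * ‖v - x‖ := by
    rw [dist_eq_norm, hmm, norm_smul, Real.norm_eq_abs, abs_of_pos hm]
  have d2 : dist v x = ‖v - x‖ := dist_eq_norm _ _
  have d3 : dist x j = r * ‖v - x‖ := by
    rw [dist_comm, dist_eq_norm, hrr, norm_smul, Real.norm_eq_abs, abs_of_pos hr,
      norm_sub_rev]
  have d4 : dist x v = ‖v - x‖ := by rw [dist_eq_norm, norm_sub_rev]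
  have d5 : dist x u = ‖x - u‖ := dist_eq_norm _ _
  have d6 : dist u x = ‖x - u‖ := by rw [dist_eq_norm, norm_sub_rev]
  have d7 : dist p' u = p * ‖x - u‖ := by
    rw [dist_eq_norm, hpp, norm_smul, Real.norm_eq_abs, abs_of_pos hp, norm_sub_rev]
  have d8 : dist x q' = q * ‖x - u‖ := by
    rw [dist_comm, dist_eq_norm, hqq, norm_smul, Real.norm_eq_abs, abs_of_pos hq]
  have d9 : dist p' q' = (1 + p + q) * ‖x - u‖ := by
    rw [dist_eq_norm, hpq, norm_smul, Real.norm_eq_abs, abs_neg,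
      abs_of_pos (by linarith : (0:ℝ) < 1 + p + q)]
  have d10 : dist y z = (1 + a + c) * ‖v - u‖ := by
    rw [dist_eq_norm, hyz, norm_smul, Real.norm_eq_abs, abs_neg,
      abs_of_pos (by linarith : (0:ℝ) < 1 + a + c)]
  have d11 : dist u v = ‖v - u‖ := by rw [dist_eq_norm, norm_sub_rev]
  have d12 : dist y u = a * ‖v - u‖ := by
    rw [dist_eq_norm, hya, norm_smul, Real.norm_eq_abs, abs_of_pos ha, norm_sub_rev]
  have d13 : dist v z = c * ‖v - u‖ := by
    rw [dist_comm, dist_eq_norm, hzc, norm_smul, Real.norm_eq_abs, abs_of_pos hc]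
  rw [d10, d11, d12, d13, d9, d5] at hd
  rw [d1, d2, d3, d4, d5, d6, d7, d8]
  set N1 := ‖v - u‖
  set N2 := ‖x - u‖
  set N3 := ‖v - x‖
  -- reduce hd to the scalar inequality
  have hd' : 2 * ((1 + a + c) * (1 + p + q)) ≤ a * c := by
    rw [div_mul_eq_mul_div, div_le_iff₀ (by positivity : (0:ℝ) < a * N1 * (c * N1))] at hd
    have hpos : (0:ℝ) < N1 * N1 * N2 := by positivity
    have h' : (N1 * N1 * N2) * (2 * ((1 + a + c) * (1 + p + q))) ≤
        (N1 * N1 * N2) * (a * c) := by nlinarith [hd]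
    exact le_of_mul_le_mul_left h' hpos
  have hfin : 1 + m + r ≤ 2 * (1 + p + q) :=
    core_ineq ha hc hp hq hm hr men1 men2 hd'
  calc m * N3 + N3 + r * N3 = (1 + m + r) * N3 := by ring
    _ ≤ (2 * (1 + p + q)) * N3 := mul_le_mul_of_nonneg_right hfin n3.le
    _ = 2 * (N3 / N2) * (p * N2 + N2 + q * N2) := by field_simp; ring
end

section
/- Let n ≥ 1 and let Σ ⊆ ℝⁿ be a nonempty open bounded connected set. Then the uniform distribution on Σ is stationary for the hit-and-run Markov chain: for every measurable set A ⊆ Σ, ∫_Σ P_u(A) du = vol(A), where the integral is with respect to n-dimensional Lebesgue measure. -/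
open MeasureTheory

/-- The uniform probability distribution on the unit sphere of `ℝⁿ`, realized as the
pushforward of the uniform distribution on the unit ball under radial normalization. -/
noncomputable def sphereUniform (n : ℕ) : Measure (EuclideanSpace ℝ (Fin n)) :=
  Measure.map (fun x : EuclideanSpace ℝ (Fin n) => ‖x‖⁻¹ • x)
    ((volume (Metric.ball (0 : EuclideanSpace ℝ (Fin n)) 1))⁻¹ •
      volume.restrict (Metric.ball (0 : EuclideanSpace ℝ (Fin n)) 1))

/-- `I(u,θ)`: the connected component containing `0` of `{t : ℝ | u + t • θ ∈ S}`. -/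
def chordInterval (n : ℕ) (S : Set (EuclideanSpace ℝ (Fin n)))
    (u θ : EuclideanSpace ℝ (Fin n)) : Set ℝ :=
  connectedComponentIn {t : ℝ | u + t • θ ∈ S} 0

/-- One step of the hit-and-run chain on `S` from `u`: draw a direction `θ` uniformly
from the unit sphere, then draw `t` uniformly from `I(u,θ)` and move to `u + t • θ`. -/
noncomputable def hitAndRunStep (n : ℕ) (S : Set (EuclideanSpace ℝ (Fin n)))
    (u : EuclideanSpace ℝ (Fin n)) : Measure (EuclideanSpace ℝ (Fin n)) :=
  (sphereUniform n).bind fun θ =>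
    Measure.map (fun t : ℝ => u + t • θ)
      ((volume (chordInterval n S u θ))⁻¹ • volume.restrict (chordInterval n S u θ))

/-! Fix a direction `θ ≠ 0`. From `u`, the step length `t` along `θ` has density
`1_{I(u,θ)}(t) / |I(u,θ)|`. For `t ∈ I(u,θ)` the chord through `u + t • θ` is the same chord,
`I(u + t • θ, θ) = I(u,θ) - t`, so this density is invariant under `(u, t) ↦ (u + t • θ, -t)`,
a Lebesgue-measure preserving involution of `ℝⁿ × ℝ`. Hence the mass carried into `A` along `θ`
equals the mass carried out of `A`, which is `vol A` because each density has total mass `1`.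
Averaging over `θ`, which is almost surely nonzero, gives the theorem. -/

open scoped ENNReal

/-- The density of the step length `t` of hit-and-run from `u` in direction `θ`. -/
noncomputable def chordDensity (n : ℕ) (S : Set (EuclideanSpace ℝ (Fin n)))
    (u θ : EuclideanSpace ℝ (Fin n)) : ℝ → ℝ≥0∞ :=
  (chordInterval n S u θ).indicator fun _ => (volume (chordInterval n S u θ))⁻¹

instance (n : ℕ) : IsProbabilityMeasure (sphereUniform n) := by
  constructor
  rw [sphereUniform, Measure.map_apply (by fun_prop) MeasurableSet.univ, Set.preimage_univ,
    Measure.smul_apply, smul_eq_mul, Measure.restrict_apply MeasurableSet.univ, Set.univ_inter]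
  exact ENNReal.inv_mul_cancel (Metric.measure_ball_pos volume 0 one_pos).ne'
    measure_ball_lt_top.ne

theorem sphereUniform_singleton_zero {n : ℕ} (hn : n ≠ 0) : sphereUniform n {0} = 0 := by
  have : NeZero n := ⟨hn⟩
  have hpre : (fun x : EuclideanSpace ℝ (Fin n) => ‖x‖⁻¹ • x) ⁻¹' {0} = {0} := by
    ext x; simp
  rw [sphereUniform, Measure.map_apply (by fun_prop) (measurableSet_singleton 0), hpre,
    Measure.smul_apply, Measure.restrict_apply (measurableSet_singleton 0),
    measure_mono_null Set.inter_subset_left (measure_singleton 0), smul_zero]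

theorem coe_lineMap_self_add {V : Type*} [AddCommGroup V] [Module ℝ V] (u θ : V) :
    ⇑(AffineMap.lineMap u (u + θ) : ℝ →ᵃ[ℝ] V) = fun r => u + r • θ := by
  ext r; simp [AffineMap.lineMap_apply_module', add_comm]

theorem isOpen_setOf_segment_subset {E : Type*} [AddCommGroup E] [Module ℝ E]
    [TopologicalSpace E] [IsTopologicalAddGroup E] [ContinuousSMul ℝ E] {S : Set E}
    (hS : IsOpen S) : IsOpen {p : E × E | segment ℝ p.1 p.2 ⊆ S} := by
  simp only [segment_eq_image, Set.image_subset_iff]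
  refine isOpen_iff_mem_nhds.2 fun p hp => isCompact_Icc.eventually_forall_of_forall_eventually
    fun r hr => ?_
  have hcont : Continuous fun q : (E × E) × ℝ => (1 - q.2) • q.1.1 + q.2 • q.1.2 := by fun_prop
  exact hcont.continuousAt.preimage_mem_nhds (hS.mem_nhds (hp hr))

section Chord

variable {n : ℕ} {S : Set (EuclideanSpace ℝ (Fin n))} {u θ : EuclideanSpace ℝ (Fin n)}
  {s t : ℝ}

local notation "E" => EuclideanSpace ℝ (Fin n)

theorem mem_chordInterval_iff_segment_subset :
    t ∈ chordInterval n S u θ ↔ segment ℝ u (u + t • θ) ⊆ S := by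
  have himage := image_segment ℝ (AffineMap.lineMap u (u + θ) : ℝ →ᵃ[ℝ] E) 0 t
  simp only [coe_lineMap_self_add, zero_smul, add_zero] at himage
  rw [← himage, Set.image_subset_iff, segment_eq_uIcc]
  constructor
  · intro ht
    have h0 := connectedComponentIn_nonempty_iff.mp ⟨t, ht⟩
    exact (isPreconnected_connectedComponentIn.ordConnected.uIcc_subset
      (mem_connectedComponentIn h0) ht).trans (connectedComponentIn_subset _ _)
  · intro h
    exact isPreconnected_uIcc.subset_connectedComponentIn Set.left_mem_uIcc h Set.right_mem_uIcc

theorem isOpen_setOf_mem_chordInterval (hS : IsOpen S) :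
    IsOpen {q : (E × E) × ℝ | q.2 ∈ chordInterval n S q.1.1 q.1.2} := by
  simp only [mem_chordInterval_iff_segment_subset]
  exact (isOpen_setOf_segment_subset hS).preimage
    (f := fun q : (E × E) × ℝ => (q.1.1, q.1.1 + q.2 • q.1.2)) (by fun_prop)

theorem isOpen_chordInterval (hS : IsOpen S) : IsOpen (chordInterval n S u θ) :=
  (hS.preimage (by fun_prop : Continuous fun t : ℝ => u + t • θ)).connectedComponentIn

theorem chordInterval_eq_empty (hu : u ∉ S) : chordInterval n S u θ = ∅ :=
  connectedComponentIn_eq_empty (by simpa using hu)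

theorem zero_mem_chordInterval (hu : u ∈ S) : (0 : ℝ) ∈ chordInterval n S u θ :=
  mem_connectedComponentIn (by simpa using hu)

theorem mem_of_mem_chordInterval (ht : t ∈ chordInterval n S u θ) : u ∈ S := by
  by_contra hu
  simp [chordInterval_eq_empty hu] at ht

theorem chordInterval_add_smul (hs : s ∈ chordInterval n S u θ) :
    chordInterval n S (u + s • θ) θ = (· + s) ⁻¹' chordInterval n S u θ := by
  set F : Set ℝ := {t | u + t • θ ∈ S}
  let h : ℝ ≃ₜ ℝ := Homeomorph.addRight s
  have hsF : s ∈ F := connectedComponentIn_subset F 0 hs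
  have hF : {t : ℝ | u + s • θ + t • θ ∈ S} = h.symm '' F := by
    ext t
    simp [h, F, Homeomorph.image_symm, add_smul, add_assoc, add_comm]
  calc chordInterval n S (u + s • θ) θ = connectedComponentIn (h.symm '' F) (h.symm s) := by
        rw [chordInterval, hF, h.symm_apply_eq.2 (zero_add s).symm]
    _ = h.symm '' connectedComponentIn F s := (h.symm.image_connectedComponentIn hsF).symm
    _ = (· + s) ⁻¹' chordInterval n S u θ := by
        rw [Homeomorph.image_symm, chordInterval, connectedComponentIn_eq hs]; rfl

theorem neg_mem_chordInterval_add_smul (ht : t ∈ chordInterval n S u θ) :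
    -t ∈ chordInterval n S (u + t • θ) θ := by
  rw [chordInterval_add_smul ht, Set.mem_preimage, neg_add_cancel]
  exact zero_mem_chordInterval (mem_of_mem_chordInterval ht)

theorem neg_mem_chordInterval_add_smul_iff :
    -t ∈ chordInterval n S (u + t • θ) θ ↔ t ∈ chordInterval n S u θ := by
  refine ⟨fun ht => ?_, neg_mem_chordInterval_add_smul⟩
  simpa using neg_mem_chordInterval_add_smul ht

theorem volume_chordInterval_pos (hS : IsOpen S) (hu : u ∈ S) :
    0 < volume (chordInterval n S u θ) :=
  (isOpen_chordInterval hS).measure_pos volume ⟨0, zero_mem_chordInterval hu⟩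

theorem volume_chordInterval_lt_top (hS : Bornology.IsBounded S) (hθ : θ ≠ 0) :
    volume (chordInterval n S u θ) < ⊤ := by
  have hanti := antilipschitzWith_lineMap (𝕜 := ℝ) (p₁ := u) (p₂ := u + θ) (by simpa using hθ)
  rw [coe_lineMap_self_add] at hanti
  refine (Bornology.IsBounded.subset (hanti.isBounded_preimage hS) fun t ht => ?_).measure_lt_top
  exact mem_chordInterval_iff_segment_subset.1 ht (right_mem_segment ℝ _ _)

theorem measurable_volume_chordInterval (hS : IsOpen S) :
    Measurable fun p : E × E => volume (chordInterval n S p.1 p.2) :=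
  measurable_measure_prodMk_left (isOpen_setOf_mem_chordInterval hS).measurableSet

/-- Detailed balance of the hit-and-run step along a fixed line. -/
theorem chordDensity_add_smul_neg :
    chordDensity n S (u + t • θ) θ (-t) = chordDensity n S u θ t := by
  by_cases ht : t ∈ chordInterval n S u θ
  · rw [chordDensity, chordDensity, Set.indicator_of_mem (neg_mem_chordInterval_add_smul ht),
      Set.indicator_of_mem ht, chordInterval_add_smul ht, measure_preimage_add_right]
  · rw [chordDensity, chordDensity,
      Set.indicator_of_notMem (mt neg_mem_chordInterval_add_smul_iff.1 ht),
      Set.indicator_of_notMem ht]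

theorem lintegral_chordDensity (hS : IsOpen S) (hSb : Bornology.IsBounded S) (hu : u ∈ S)
    (hθ : θ ≠ 0) : ∫⁻ t, chordDensity n S u θ t = 1 := by
  simp only [chordDensity]
  rw [lintegral_indicator (isOpen_chordInterval hS).measurableSet, setLIntegral_const,
    ENNReal.inv_mul_cancel (volume_chordInterval_pos hS hu).ne'
      (volume_chordInterval_lt_top hSb hθ).ne]

theorem measurable_chordDensity (hS : IsOpen S) : Measurable (chordDensity n S u θ) :=
  measurable_const.indicator (isOpen_chordInterval hS).measurableSet

theorem Measurable.chordDensity {α : Type*} [MeasurableSpace α] {f g : α → E} {h : α → ℝ}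
    (hS : IsOpen S) (hf : Measurable f) (hg : Measurable g) (hh : Measurable h) :
    Measurable fun x => chordDensity n S (f x) (g x) (h x) :=
  ((measurable_volume_chordInterval hS).comp (hf.prodMk hg)).inv.indicator
    ((isOpen_setOf_mem_chordInterval hS).measurableSet.preimage ((hf.prodMk hg).prodMk hh))

theorem measurable_lintegral_chordDensity_mul_indicator (hS : IsOpen S) {A : Set E}
    (hA : MeasurableSet A) :
    Measurable fun p : E × E =>
      ∫⁻ t, chordDensity n S p.1 p.2 t * A.indicator 1 (p.1 + t • p.2) :=
  ((measurable_fst.fst.chordDensity hS measurable_fst.snd measurable_snd).mul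
    ((measurable_one.indicator hA).comp
      (by fun_prop : Measurable fun q : (E × E) × ℝ => q.1.1 + q.2 • q.1.2))
    ).lintegral_prod_right'

theorem inv_volume_smul_restrict_chordInterval (hS : IsOpen S) :
    (volume (chordInterval n S u θ))⁻¹ • volume.restrict (chordInterval n S u θ) =
      volume.withDensity (chordDensity n S u θ) := by
  rw [chordDensity, withDensity_indicator (isOpen_chordInterval hS).measurableSet,
    withDensity_const]

theorem hitAndRunStep_apply (hS : IsOpen S) {A : Set E} (hA : MeasurableSet A) :
    hitAndRunStep n S u A =
      ∫⁻ θ, ∫⁻ t, chordDensity n S u θ t * A.indicator 1 (u + t • θ) ∂volume ∂sphereUniform n := by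
  have happly (θ : E) {s : Set E} (hs : MeasurableSet s) :
      (volume.withDensity (chordDensity n S u θ)).map (fun t : ℝ => u + t • θ) s =
        ∫⁻ t, chordDensity n S u θ t * s.indicator 1 (u + t • θ) := by
    rw [← lintegral_indicator_one hs, lintegral_map (measurable_one.indicator hs) (by fun_prop),
      lintegral_withDensity_eq_lintegral_mul _ (measurable_chordDensity hS)
        (g := fun t => s.indicator 1 (u + t • θ))
        ((measurable_one.indicator hs).comp (by fun_prop))]
    rfl
  simp_rw [hitAndRunStep, inv_volume_smul_restrict_chordInterval hS]
  rw [Measure.bind_apply hA (Measure.measurable_of_measurable_coe _ fun s hs => ?_).aemeasurable]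
  · simp_rw [happly _ hA]
  · simp_rw [happly _ hs]
    have h := (measurable_lintegral_chordDensity_mul_indicator hS hs).comp
      (measurable_prodMk_left (x := u))
    exact h

theorem hitAndRunStep_eq_zero (hu : u ∉ S) : hitAndRunStep n S u = 0 := by
  simp [hitAndRunStep, chordInterval_eq_empty hu]

theorem lintegral_lintegral_chordDensity_mul_indicator (hS : IsOpen S)
    (hSb : Bornology.IsBounded S) {A : Set E} (hA : MeasurableSet A) (hAS : A ⊆ S) (hθ : θ ≠ 0) :
    ∫⁻ u, ∫⁻ t, chordDensity n S u θ t * A.indicator 1 (u + t • θ) = volume A := by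
  have hk : Measurable fun p : ℝ × E => chordDensity n S p.2 θ p.1 :=
    measurable_snd.chordDensity hS measurable_const measurable_fst
  have hΦ : Measurable fun p : ℝ × E =>
      chordDensity n S p.2 θ p.1 * A.indicator 1 (p.2 + p.1 • θ) :=
    hk.mul ((measurable_one.indicator hA).comp (by fun_prop))
  have hτ : MeasurePreserving (fun p : ℝ × E => (-p.1, p.2 + p.1 • θ)) :=
    (Measure.measurePreserving_neg volume).skew_product (by fun_prop)
      (ae_of_all _ fun t => map_add_right_eq_self volume (t • θ))
  calc ∫⁻ u, ∫⁻ t, chordDensity n S u θ t * A.indicator 1 (u + t • θ)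
      = ∫⁻ p : ℝ × E, chordDensity n S p.2 θ p.1 * A.indicator 1 (p.2 + p.1 • θ) :=
        (lintegral_prod_symm _ hΦ.aemeasurable).symm
    _ = ∫⁻ p : ℝ × E, chordDensity n S p.2 θ p.1 * A.indicator 1 p.2 := by
        rw [← hτ.lintegral_comp hΦ]
        simp [chordDensity_add_smul_neg]
    _ = ∫⁻ u, (∫⁻ t, chordDensity n S u θ t) * A.indicator 1 u := by
        have hΨ : Measurable fun p : ℝ × E =>
            chordDensity n S p.2 θ p.1 * A.indicator 1 p.2 :=
          hk.mul ((measurable_one.indicator hA).comp measurable_snd)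
        rw [Measure.volume_eq_prod, lintegral_prod_symm _ hΨ.aemeasurable]
        simp_rw [lintegral_mul_const _ (measurable_chordDensity hS)]
    _ = ∫⁻ u, A.indicator 1 u := lintegral_congr fun u => by
        by_cases hu : u ∈ A
        · simp [hu, lintegral_chordDensity hS hSb (hAS hu) hθ]
        · simp [hu]
    _ = volume A := lintegral_indicator_one hA

end Chord

theorem stmt_14_general (n : ℕ) (hn : 1 ≤ n) (S : Set (EuclideanSpace ℝ (Fin n)))
    (hSopen : IsOpen S) (hSbdd : Bornology.IsBounded S)
    (A : Set (EuclideanSpace ℝ (Fin n))) (hAm : MeasurableSet A) (hAS : A ⊆ S) :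
    ∫⁻ u in S, hitAndRunStep n S u A = volume A := by
  have hsupp : (fun u => hitAndRunStep n S u A).support ⊆ S := fun u hu =>
    by_contra fun huS => hu (by simp [hitAndRunStep_eq_zero huS])
  have hdir : ∀ᵐ θ ∂sphereUniform n, θ ≠ 0 :=
    measure_eq_zero_iff_ae_notMem.1 (sphereUniform_singleton_zero (by omega))
  calc ∫⁻ u in S, hitAndRunStep n S u A
      = ∫⁻ u, hitAndRunStep n S u A := setLIntegral_eq_of_support_subset hsupp
    _ = ∫⁻ u, ∫⁻ θ, ∫⁻ t, chordDensity n S u θ t * A.indicator 1 (u + t • θ)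
          ∂volume ∂sphereUniform n := lintegral_congr fun u => hitAndRunStep_apply hSopen hAm
    _ = ∫⁻ θ, ∫⁻ u, ∫⁻ t, chordDensity n S u θ t * A.indicator 1 (u + t • θ)
          ∂volume ∂volume ∂sphereUniform n :=
        lintegral_lintegral_swap
          (measurable_lintegral_chordDensity_mul_indicator hSopen hAm).aemeasurable
    _ = ∫⁻ _, volume A ∂sphereUniform n := lintegral_congr_ae (hdir.mono fun θ hθ =>
          lintegral_lintegral_chordDensity_mul_indicator hSopen hSbdd hAm hAS hθ)
    _ = volume A := by simp

/-- stationarity of the uniform distribution for Hit-and-Run, Smith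
1984: for every measurable `A ⊆ S`, `∫_S P_u(A) du = vol(A)`. -/
theorem stmt_14 (n : ℕ) (hn : 1 ≤ n) (S : Set (EuclideanSpace ℝ (Fin n)))
    (hSne : S.Nonempty) (hSopen : IsOpen S) (hSbdd : Bornology.IsBounded S)
    (hSconn : IsConnected S)
    (A : Set (EuclideanSpace ℝ (Fin n))) (hAm : MeasurableSet A) (hAS : A ⊆ S) :
    ∫⁻ u in S, hitAndRunStep n S u A = volume A :=
  stmt_14_general n hn S hSopen hSbdd A hAm hAS
end
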